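/- (Exponential reduction to an ODE.) Let d ≥ 1, let p = Σ_{k=0}^n a_k t^k with a₀, …, a_n ∈ ℂ[x₁, …, x_d], and let ξ ∈ ℝ^d. Let E_ξ ∈ 𝓢'(ℝ^d) be the regular tempered distribution ⟨E_ξ, ψ⟩ = ∫_{ℝ^d} e^{i ξ·x} ψ(x) dx. Let w : ℝ → ℂ be continuous and define u : ℝ → 𝓢'(ℝ^d) by u(t) = w(t)·E_ξ. Then D_p u = 0 in the sense of distributions if and only if w satisfies the scalar distributional ODE Σ_{k=0}^n a_k(iξ₁, …, iξ_d) (−1)^k ∫_ℝ w(t) φ^{(k)}(t) dt = 0 for every infinitely differentiable compactly supported φ : ℝ → ℂ, where a_k(iξ₁, …, iξ_d) denotes the evaluation of the polynomial a_k at the point (iξ₁, …, iξ_d) ∈ ℂ^d. -/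

import Mathlib

open MeasureTheory Filter Topology SchwartzMap

set_option synthInstance.maxHeartbeats 1000000
set_option maxHeartbeats 1000000

/-- For a polynomial `q ∈ ℂ[x₁, …, x_d]`, the differential operator `q^∨(∂)` on Schwartz
functions obtained by substituting `−∂/∂xⱼ` for `xⱼ` in `q`. -/
noncomputable def dualOp (d : ℕ) (q : MvPolynomial (Fin d) ℂ) :
    SchwartzMap (EuclideanSpace ℝ (Fin d)) ℂ →L[ℂ] SchwartzMap (EuclideanSpace ℝ (Fin d)) ℂ :=
  (AddMonoidAlgebra.coeff q).sum fun m c => c •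
    (List.ofFn fun j : Fin d =>
      (-(SchwartzMap.evalCLM ℂ (EuclideanSpace ℝ (Fin d)) ℂ (EuclideanSpace.single j (1 : ℝ)) ∘L
          SchwartzMap.fderivCLM ℂ (EuclideanSpace ℝ (Fin d)) ℂ :
          SchwartzMap (EuclideanSpace ℝ (Fin d)) ℂ →L[ℂ]
            SchwartzMap (EuclideanSpace ℝ (Fin d)) ℂ)) ^ (m j)).prod

/-- `u : ℝ → 𝓢'(ℝ^d)` satisfies `D_p u = 0` in the sense of distributions, where
`p = ∑_{k=0}^n a_k t^k` with `a_k ∈ ℂ[x₁, …, x_d]`: for every infinitely differentiable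
compactly supported `φ : ℝ → ℂ` and every Schwartz `ψ`,
`∑_{k=0}^n (−1)^k ∫ φ⁽ᵏ⁾(t) ⟨u(t), a_k^∨(∂) ψ⟩ dt = 0`. -/
def IsDistSolPDE (d n : ℕ) (a : ℕ → MvPolynomial (Fin d) ℂ)
    (u : ℝ → (SchwartzMap (EuclideanSpace ℝ (Fin d)) ℂ →L[ℂ] ℂ)) : Prop :=
  ∀ φ : ℝ → ℂ, ContDiff ℝ (⊤ : ℕ∞) φ → HasCompactSupport φ →
    ∀ ψ : SchwartzMap (EuclideanSpace ℝ (Fin d)) ℂ,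
      ∑ k ∈ Finset.range (n + 1),
        (-1 : ℂ) ^ k * ∫ t : ℝ, iteratedDeriv k φ t * u t (dualOp d (a k) ψ) = 0

/-- Membership in `S_p`: `t ↦ ⟨u(t), ψ⟩` is continuous for every Schwartz `ψ`, and
`D_p u = 0` in the sense of distributions. -/
def MemSpPDE (d n : ℕ) (a : ℕ → MvPolynomial (Fin d) ℂ)
    (u : ℝ → (SchwartzMap (EuclideanSpace ℝ (Fin d)) ℂ →L[ℂ] ℂ)) : Prop :=
  (∀ ψ : SchwartzMap (EuclideanSpace ℝ (Fin d)) ℂ, Continuous fun t : ℝ => u t ψ) ∧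
    IsDistSolPDE d n a u

/-- The concatenation `u₁ ⌢ u₂`: equal to `u₁(t)` for `t ≤ 0` and to `u₂(t)` for `t ≥ 0`. -/
noncomputable def concatPDE (d : ℕ)
    (u₁ u₂ : ℝ → (SchwartzMap (EuclideanSpace ℝ (Fin d)) ℂ →L[ℂ] ℂ)) :
    ℝ → (SchwartzMap (EuclideanSpace ℝ (Fin d)) ℂ →L[ℂ] ℂ) :=
  fun t => if t ≤ 0 then u₁ t else u₂ t

/-- `S_p` has the concatenability property: whenever `u₁, u₂ ∈ S_p` are such that
`t ↦ ⟨uᵢ(t), ψ⟩` is continuously differentiable for every Schwartz `ψ` and `u₁(0) = u₂(0)`,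
the concatenation `u₁ ⌢ u₂` belongs to `S_p`. -/
def ConcatenablePDE (d n : ℕ) (a : ℕ → MvPolynomial (Fin d) ℂ) : Prop :=
  ∀ u₁ u₂ : ℝ → (SchwartzMap (EuclideanSpace ℝ (Fin d)) ℂ →L[ℂ] ℂ),
    MemSpPDE d n a u₁ → MemSpPDE d n a u₂ →
    (∀ ψ : SchwartzMap (EuclideanSpace ℝ (Fin d)) ℂ, ContDiff ℝ 1 fun t : ℝ => u₁ t ψ) →
    (∀ ψ : SchwartzMap (EuclideanSpace ℝ (Fin d)) ℂ, ContDiff ℝ 1 fun t : ℝ => u₂ t ψ) →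
    u₁ 0 = u₂ 0 →
    MemSpPDE d n a (concatPDE d u₁ u₂)



/-- The linear functional `x ↦ I * ⟪ξ, x⟫`. -/
noncomputable def expLin (ξ : EuclideanSpace ℝ (Fin d)) :
    EuclideanSpace ℝ (Fin d) →L[ℝ] ℂ :=
  Complex.I • (Complex.ofRealCLM.comp (innerSL ℝ ξ))

/-- The exponential function `x ↦ e^{i ⟪ξ, x⟫}`. -/
noncomputable def expMul (ξ : EuclideanSpace ℝ (Fin d)) :
    EuclideanSpace ℝ (Fin d) → ℂ :=
  fun x => Complex.exp (Complex.I * ((inner ℝ ξ x : ℝ) : ℂ))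

lemma expLin_apply (ξ x : EuclideanSpace ℝ (Fin d)) :
    expLin ξ x = Complex.I * ((inner ℝ ξ x : ℝ) : ℂ) := by
  simp [expLin]

lemma expMul_eq (ξ : EuclideanSpace ℝ (Fin d)) :
    expMul ξ = fun x => Complex.exp (expLin ξ x) := by
  funext x; rw [expMul, expLin_apply]

lemma hasFDerivAt_expMul (ξ x : EuclideanSpace ℝ (Fin d)) :
    HasFDerivAt (expMul ξ) (expMul ξ x • expLin ξ) x := by
  rw [expMul_eq]
  exact ((expLin ξ).hasFDerivAt (x := x)).cexp

lemma norm_expMul (ξ x : EuclideanSpace ℝ (Fin d)) : ‖expMul ξ x‖ = 1 := by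
  simp [expMul, Complex.norm_exp]

lemma continuous_expMul (ξ : EuclideanSpace ℝ (Fin d)) : Continuous (expMul ξ) := by
  rw [expMul_eq]; exact Complex.continuous_exp.comp (expLin ξ).continuous

lemma integrable_expMul_mul (ξ : EuclideanSpace ℝ (Fin d))
    (ψ : SchwartzMap (EuclideanSpace ℝ (Fin d)) ℂ) :
    Integrable (fun x => expMul ξ x * ψ x) := by
  exact (ψ.integrable).bdd_mul (continuous_expMul ξ).aestronglyMeasurable
    (c := 1) (Filter.Eventually.of_forall fun x => le_of_eq (norm_expMul ξ x))

lemma key_ibp (ξ v : EuclideanSpace ℝ (Fin d))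
    (ψ : SchwartzMap (EuclideanSpace ℝ (Fin d)) ℂ) :
    ∫ x, expMul ξ x * ((SchwartzMap.evalCLM ℂ (EuclideanSpace ℝ (Fin d)) ℂ v ∘L SchwartzMap.fderivCLM ℂ (EuclideanSpace ℝ (Fin d)) ℂ) ψ) x
      = -((Complex.I * ((inner ℝ ξ v : ℝ) : ℂ)) * ∫ x, expMul ξ x * ψ x) := by
  have hfder : ∀ x, fderiv ℝ (expMul ξ) x = expMul ξ x • expLin ξ :=
    fun x => (hasFDerivAt_expMul ξ x).fderiv
  have h1 : Integrable (fun x => fderiv ℝ (expMul ξ) x v * ψ x) := by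
    have e : (fun x => fderiv ℝ (expMul ξ) x v * ψ x)
        = fun x => (Complex.I * ((inner ℝ ξ v : ℝ) : ℂ)) * (expMul ξ x * ψ x) := by
      funext x
      rw [hfder x]
      simp [expLin_apply]
      ring
    rw [e]
    exact (integrable_expMul_mul ξ ψ).const_mul _
  have h2 : Integrable (fun x => expMul ξ x * fderiv ℝ (⇑ψ) x v) := by
    have e : (fun x => expMul ξ x * fderiv ℝ (⇑ψ) x v)
        = fun x => expMul ξ x * ((SchwartzMap.evalCLM ℂ (EuclideanSpace ℝ (Fin d)) ℂ v ∘L SchwartzMap.fderivCLM ℂ (EuclideanSpace ℝ (Fin d)) ℂ) ψ) x := by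
      funext x; rw [ContinuousLinearMap.comp_apply, SchwartzMap.evalCLM_apply_apply, SchwartzMap.fderivCLM_apply]
    rw [e]
    exact integrable_expMul_mul ξ ((SchwartzMap.evalCLM ℂ (EuclideanSpace ℝ (Fin d)) ℂ v ∘L SchwartzMap.fderivCLM ℂ (EuclideanSpace ℝ (Fin d)) ℂ) ψ)
  have h3 := integrable_expMul_mul ξ ψ
  have hfd : Differentiable ℝ (expMul ξ) :=
    fun x => (hasFDerivAt_expMul ξ x).differentiableAt
  have hψd : Differentiable ℝ (⇑ψ) := ψ.differentiable
  have H := integral_mul_fderiv_eq_neg_fderiv_mul_of_integrable h1 h2 h3 (fun x _ => hfd x) (fun x _ => hψd x)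
  calc ∫ x, expMul ξ x * ((SchwartzMap.evalCLM ℂ (EuclideanSpace ℝ (Fin d)) ℂ v ∘L SchwartzMap.fderivCLM ℂ (EuclideanSpace ℝ (Fin d)) ℂ) ψ) x
      = ∫ x, expMul ξ x * fderiv ℝ (⇑ψ) x v := by
        simp_rw [ContinuousLinearMap.comp_apply, SchwartzMap.evalCLM_apply_apply, SchwartzMap.fderivCLM_apply]
    _ = - ∫ x, fderiv ℝ (expMul ξ) x v * ψ x := H
    _ = - ∫ x, (Complex.I * ((inner ℝ ξ v : ℝ) : ℂ)) * (expMul ξ x * ψ x) := by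
        congr 1
        refine integral_congr_ae (Filter.Eventually.of_forall fun x => ?_)
        simp only [hfder x, ContinuousLinearMap.smul_apply, expLin_apply, smul_eq_mul]
        ring
    _ = -((Complex.I * ((inner ℝ ξ v : ℝ) : ℂ)) * ∫ x, expMul ξ x * ψ x) := by
        rw [MeasureTheory.integral_const_mul]
/-- A smooth compactly supported function as a Schwartz map. -/
noncomputable def toSchwartzOfCompactSupport {E : Type*} [NormedAddCommGroup E]
    [NormedSpace ℝ E]
    (f : E → ℂ) (hf : ContDiff ℝ ((⊤ : ℕ∞) : WithTop ℕ∞) f) (h2f : HasCompactSupport f) : SchwartzMap E ℂ where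
  toFun := f
  smooth' := hf
  decay' := by
    intro k n
    have h1 : HasCompactSupport (iteratedFDeriv ℝ n f) := h2f.iteratedFDeriv n
    have hcont : Continuous fun x => ‖x‖ ^ k * ‖iteratedFDeriv ℝ n f x‖ :=
      ((continuous_norm.pow k)).mul (hf.continuous_iteratedFDeriv (by exact_mod_cast le_top)).norm
    have hsupp : HasCompactSupport fun x => ‖x‖ ^ k * ‖iteratedFDeriv ℝ n f x‖ :=
      (h1.norm).mul_left
    obtain ⟨C, hC⟩ := hcont.bounded_above_of_compact_support hsupp
    exact ⟨C, fun x => (le_abs_self _).trans (by rw [← Real.norm_eq_abs]; exact hC x)⟩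

lemma exists_good_psi {d : ℕ} (ξ : EuclideanSpace ℝ (Fin d))
    (Eξ : SchwartzMap (EuclideanSpace ℝ (Fin d)) ℂ →L[ℂ] ℂ)
    (hEξ : ∀ ψ : SchwartzMap (EuclideanSpace ℝ (Fin d)) ℂ,
      Eξ ψ = ∫ x, expMul ξ x * ψ x) :
    ∃ ψ, Eξ ψ ≠ 0 := by
  let b : ContDiffBump (0 : EuclideanSpace ℝ (Fin d)) := ⟨1, 2, one_pos, one_lt_two⟩
  let g : EuclideanSpace ℝ (Fin d) → ℂ := fun x => expMul (-ξ) x * ((b x : ℝ) : ℂ)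
  have hgsm : ContDiff ℝ ((⊤ : ℕ∞) : WithTop ℕ∞) g := by
    have h1 : ContDiff ℝ ((⊤ : ℕ∞) : WithTop ℕ∞) (expMul (-ξ)) := by
      rw [expMul_eq]
      exact (expLin (-ξ)).contDiff.cexp
    exact h1.mul (Complex.ofRealCLM.contDiff.comp (b.contDiff (n := (⊤ : ℕ∞))))
  have hgc : HasCompactSupport g := by
    have hb : HasCompactSupport fun x : EuclideanSpace ℝ (Fin d) => ((b x : ℝ) : ℂ) :=
      (b.hasCompactSupport).comp_left (g := fun r : ℝ => (r : ℂ)) Complex.ofReal_zero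
    exact hb.mul_left
  refine ⟨toSchwartzOfCompactSupport g hgsm hgc, ?_⟩
  have hcoe : ∀ x, (toSchwartzOfCompactSupport g hgsm hgc) x = g x := fun _ => rfl
  rw [hEξ]
  have hpt : ∀ x, expMul ξ x * (toSchwartzOfCompactSupport g hgsm hgc) x
      = ((b x : ℝ) : ℂ) := by
    intro x
    rw [hcoe]
    show expMul ξ x * (expMul (-ξ) x * _) = _
    rw [← mul_assoc, expMul, expMul, ← Complex.exp_add]
    have : Complex.I * ((inner ℝ ξ x : ℝ) : ℂ) + Complex.I * ((inner ℝ (-ξ) x : ℝ) : ℂ) = 0 := by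
      rw [inner_neg_left]
      push_cast
      ring
    rw [this, Complex.exp_zero, one_mul]
  rw [integral_congr_ae (Filter.Eventually.of_forall hpt)]
  have h0 : ∫ x : EuclideanSpace ℝ (Fin d), ((b x : ℝ) : ℂ)
      = (((∫ x : EuclideanSpace ℝ (Fin d), b x : ℝ)) : ℂ) := by
    exact integral_ofReal
  rw [h0]
  have := b.integral_pos (μ := volume)
  exact_mod_cast ne_of_gt this

section eig

variable {d : ℕ} (ξ : EuclideanSpace ℝ (Fin d))
  (Eξ : SchwartzMap (EuclideanSpace ℝ (Fin d)) ℂ →L[ℂ] ℂ)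
  (hEξ : ∀ ψ : SchwartzMap (EuclideanSpace ℝ (Fin d)) ℂ,
    Eξ ψ = ∫ x, expMul ξ x * ψ x)

include hEξ

lemma eig_neg_pderiv (j : Fin d) (ψ : SchwartzMap (EuclideanSpace ℝ (Fin d)) ℂ) :
    Eξ ((-(SchwartzMap.evalCLM ℂ (EuclideanSpace ℝ (Fin d)) ℂ (EuclideanSpace.single j (1 : ℝ)) ∘L
          SchwartzMap.fderivCLM ℂ (EuclideanSpace ℝ (Fin d)) ℂ :
          SchwartzMap (EuclideanSpace ℝ (Fin d)) ℂ →L[ℂ]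
            SchwartzMap (EuclideanSpace ℝ (Fin d)) ℂ)) ψ)
      = (Complex.I * ((ξ j : ℝ) : ℂ)) * Eξ ψ := by
  rw [ContinuousLinearMap.neg_apply, map_neg, hEξ, hEξ, key_ibp]
  have : (inner ℝ ξ (EuclideanSpace.single j (1 : ℝ)) : ℝ) = ξ j := by
    rw [EuclideanSpace.inner_single_right]
    simp
  rw [this, neg_neg]

omit hEξ in
lemma eig_pow (T : SchwartzMap (EuclideanSpace ℝ (Fin d)) ℂ →L[ℂ]
      SchwartzMap (EuclideanSpace ℝ (Fin d)) ℂ) (c : ℂ)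
    (h : ∀ ψ, Eξ (T ψ) = c * Eξ ψ) (k : ℕ) :
    ∀ ψ, Eξ ((T ^ k) ψ) = c ^ k * Eξ ψ := by
  induction k with
  | zero => intro ψ; simp [ContinuousLinearMap.one_apply]
  | succ k ih =>
    intro ψ
    rw [pow_succ, ContinuousLinearMap.mul_apply, ih (T ψ), h ψ, pow_succ]
    ring

omit hEξ in
lemma eig_listProd : ∀ {N : ℕ}
    (T : Fin N → (SchwartzMap (EuclideanSpace ℝ (Fin d)) ℂ →L[ℂ]
      SchwartzMap (EuclideanSpace ℝ (Fin d)) ℂ)) (c : Fin N → ℂ),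
    (∀ j ψ, Eξ (T j ψ) = c j * Eξ ψ) →
    ∀ ψ, Eξ ((List.ofFn T).prod ψ) = (∏ j, c j) * Eξ ψ := by
  intro N
  induction N with
  | zero => intro T c h ψ; simp [List.ofFn_zero, ContinuousLinearMap.one_apply]
  | succ N ih =>
    intro T c h ψ
    rw [List.ofFn_succ, List.prod_cons, ContinuousLinearMap.mul_apply, h 0,
      ih (fun j => T j.succ) (fun j => c j.succ) (fun j ψ => h j.succ ψ) ψ,
      Fin.prod_univ_succ]
    ring

lemma eig_dualOp (q : MvPolynomial (Fin d) ℂ)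
    (ψ : SchwartzMap (EuclideanSpace ℝ (Fin d)) ℂ) :
    Eξ (dualOp d q ψ)
      = MvPolynomial.eval (fun j : Fin d => Complex.I * ((ξ j : ℝ) : ℂ)) q * Eξ ψ := by
  have hm : ∀ (m : Fin d →₀ ℕ) ψ,
      Eξ (((List.ofFn fun j : Fin d =>
        (-(SchwartzMap.evalCLM ℂ (EuclideanSpace ℝ (Fin d)) ℂ (EuclideanSpace.single j (1 : ℝ)) ∘L
          SchwartzMap.fderivCLM ℂ (EuclideanSpace ℝ (Fin d)) ℂ :
          SchwartzMap (EuclideanSpace ℝ (Fin d)) ℂ →L[ℂ]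
            SchwartzMap (EuclideanSpace ℝ (Fin d)) ℂ)) ^ (m j)).prod) ψ)
        = (∏ j : Fin d, (Complex.I * ((ξ j : ℝ) : ℂ)) ^ (m j)) * Eξ ψ := by
    intro m
    exact eig_listProd Eξ _ _
      (fun j => eig_pow Eξ _ _ (eig_neg_pderiv ξ Eξ hEξ j) (m j))
  unfold dualOp
  rw [MvPolynomial.eval_eq', Finsupp.sum]
  simp only [ContinuousLinearMap.sum_apply, ContinuousLinearMap.smul_apply, map_sum,
    _root_.map_smul, smul_eq_mul]
  rw [Finset.sum_mul]
  refine Finset.sum_congr rfl fun m _ => ?_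
  rw [hm m ψ]
  simp [MvPolynomial.coeff]
  ring

end eig

/-- (Exponential reduction to an ODE.) Let `d ≥ 1`, `p = ∑_{k=0}^n a_k t^k` with
`a_k ∈ ℂ[x₁, …, x_d]`, and `ξ ∈ ℝ^d`. Let `E_ξ ∈ 𝓢'(ℝ^d)` be the regular tempered
distribution `⟨E_ξ, ψ⟩ = ∫ e^{iξ·x} ψ(x) dx`. Let `w : ℝ → ℂ` be continuous and set
`u(t) = w(t) · E_ξ`. Then `D_p u = 0` in the sense of distributions if and only if `w`
satisfies the scalar distributional ODE
`∑_{k=0}^n a_k(iξ₁, …, iξ_d) (−1)^k ∫ w(t) φ⁽ᵏ⁾(t) dt = 0` for every test function `φ`. -/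
theorem exponential_reduction (d n : ℕ) (hd : 1 ≤ d)
    (a : ℕ → MvPolynomial (Fin d) ℂ) (ξ : EuclideanSpace ℝ (Fin d))
    (Eξ : SchwartzMap (EuclideanSpace ℝ (Fin d)) ℂ →L[ℂ] ℂ)
    (hEξ : ∀ ψ : SchwartzMap (EuclideanSpace ℝ (Fin d)) ℂ,
      Eξ ψ = ∫ x : EuclideanSpace ℝ (Fin d),
        Complex.exp (Complex.I * ((inner ℝ ξ x : ℝ) : ℂ)) * ψ x)
    (w : ℝ → ℂ) (hw : Continuous w) :
    IsDistSolPDE d n a (fun t : ℝ => w t • Eξ) ↔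
      ∀ φ : ℝ → ℂ, ContDiff ℝ (⊤ : ℕ∞) φ → HasCompactSupport φ →
        ∑ k ∈ Finset.range (n + 1),
          MvPolynomial.eval (fun j : Fin d => Complex.I * ((ξ j : ℝ) : ℂ)) (a k) *
            ((-1 : ℂ) ^ k * ∫ t : ℝ, w t * iteratedDeriv k φ t) = 0 := by
  have hEξ' : ∀ ψ : SchwartzMap (EuclideanSpace ℝ (Fin d)) ℂ,
      Eξ ψ = ∫ x, expMul ξ x * ψ x := hEξ
  have heig := eig_dualOp ξ Eξ hEξ'
  have hmain : ∀ (φ : ℝ → ℂ) (ψ : SchwartzMap (EuclideanSpace ℝ (Fin d)) ℂ),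
      ∑ k ∈ Finset.range (n + 1),
        (-1 : ℂ) ^ k * ∫ t : ℝ, iteratedDeriv k φ t * (w t • Eξ) (dualOp d (a k) ψ)
      = (∑ k ∈ Finset.range (n + 1),
          MvPolynomial.eval (fun j : Fin d => Complex.I * ((ξ j : ℝ) : ℂ)) (a k) *
            ((-1 : ℂ) ^ k * ∫ t : ℝ, w t * iteratedDeriv k φ t)) * Eξ ψ := by
    intro φ ψ
    rw [Finset.sum_mul]
    refine Finset.sum_congr rfl fun k _ => ?_
    have hpt : ∀ t : ℝ, iteratedDeriv k φ t * (w t • Eξ) (dualOp d (a k) ψ)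
        = (MvPolynomial.eval (fun j : Fin d => Complex.I * ((ξ j : ℝ) : ℂ)) (a k) * Eξ ψ)
            * (w t * iteratedDeriv k φ t) := by
      intro t
      rw [ContinuousLinearMap.smul_apply, smul_eq_mul, heig (a k) ψ]
      ring
    rw [integral_congr_ae (Filter.Eventually.of_forall hpt), MeasureTheory.integral_const_mul]
    ring
  constructor
  · intro hsol φ hφ h2φ
    obtain ⟨ψ, hψ⟩ := exists_good_psi ξ Eξ hEξ'
    have h := hsol φ hφ h2φ ψ
    rw [hmain φ ψ] at h
    exact (mul_eq_zero.1 h).resolve_right hψ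
  · intro hode φ hφ h2φ ψ
    rw [hmain φ ψ, hode φ hφ h2φ, zero_mul]
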